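/- Let X and Y be measurable spaces equipped with σ-finite measures μ and ν, and let π be a joint probability density on X×Y with respect to μ⊗ν, with x-marginal π_X and conditional densities π(y|x). Let Q be a measurably parameterized family of joint probability densities on X×Y, each of whose x-marginal equals π_X for μ-almost every x, and let Π be a probability measure on Q. Define the mixture conditional density π_Π(y|x) = ∫_Q q(y|x) dΠ(q). Then ∫_X π_X(x) · H(π_Π(·|x), π(·|x))² dμ(x) ≤ ∫_Q H(q, π)² dΠ(q), where the Hellinger distance on the left is between conditional densities with respect to ν and on the right between joint densities with respect to μ⊗ν. -/
import Mathlib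


open MeasureTheory Filter

/-- Hellinger distance between two densities `p`, `q` with respect to a measure `m`:
`H(p,q) = (∫ (√p − √q)² dm)^{1/2}`. -/
noncomputable def hell {Z : Type*} [MeasurableSpace Z] (m : Measure Z) (p q : Z → ℝ) : ℝ :=
  Real.sqrt (∫ z, (Real.sqrt (p z) - Real.sqrt (q z)) ^ 2 ∂m)

lemma hell_sq {Z : Type*} [MeasurableSpace Z] (m : Measure Z) (p q : Z → ℝ) :
    hell m p q ^ 2 = ∫ z, (Real.sqrt (p z) - Real.sqrt (q z)) ^ 2 ∂m :=
  Real.sq_sqrt (integral_nonneg fun _ => sq_nonneg _)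

set_option maxHeartbeats 8000000 in
/-- Disintegration-and-Jensen step: let `π` be a joint probability
density on `X × Y` with x-marginal `π_X` and conditionals `π(y|x) = π(x,y)/π_X(x)`;
let `q` be a measurably parameterized family of joint probability densities, each with
x-marginal equal to `π_X` μ-a.e., and let `Π` be a probability measure on the parameter
space. With the mixture conditional density `π_Π(y|x) = ∫ q_i(y|x) dΠ(i)`
(where `q_i(y|x) = q_i(x,y)/q_{i,X}(x)`), one has
`∫ π_X(x) · H(π_Π(·|x), π(·|x))² dμ(x) ≤ ∫ H(q_i, π)² dΠ(i)`. -/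
theorem stmt3 {X Y Q : Type*}
    [MeasurableSpace X] [MeasurableSpace Y] [MeasurableSpace Q]
    (μ : Measure X) (ν : Measure Y) [SigmaFinite μ] [SigmaFinite ν]
    (ptrue : X × Y → ℝ)
    (hπm : Measurable ptrue) (hπ0 : ∀ z, 0 ≤ ptrue z)
    (hπ1 : ∫ z, ptrue z ∂(μ.prod ν) = 1)
    (pX : X → ℝ) (hpX : ∀ x, pX x = ∫ y, ptrue (x, y) ∂ν)
    (q : Q → X × Y → ℝ)
    (hqm : Measurable (Function.uncurry q))
    (hq0 : ∀ i z, 0 ≤ q i z)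
    (hq1 : ∀ i, ∫ z, q i z ∂(μ.prod ν) = 1)
    (hqmarg : ∀ i, ∀ᵐ x ∂μ, (∫ y, q i (x, y) ∂ν) = pX x)
    (Pi : Measure Q) [IsProbabilityMeasure Pi] :
    ∫ x, pX x *
        hell ν (fun y => ∫ i, q i (x, y) / (∫ y', q i (x, y') ∂ν) ∂Pi)
               (fun y => ptrue (x, y) / pX x) ^ 2 ∂μ
      ≤ ∫ i, hell (μ.prod ν) (q i) ptrue ^ 2 ∂Pi := by
  classical
  -- basic integrability of the densities
  have hπint : Integrable ptrue (μ.prod ν) := by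
    by_contra h
    rw [integral_undef h] at hπ1; norm_num at hπ1
  have hqint : ∀ i, Integrable (q i) (μ.prod ν) := by
    intro i
    by_contra h
    have h1 := hq1 i
    rw [integral_undef h] at h1; norm_num at h1
  have hqmi : ∀ z : X × Y, Measurable fun i => q i z := fun z =>
    hqm.comp measurable_prodMk_right
  have hqim : ∀ i, Measurable (q i) := fun i => hqm.comp measurable_prodMk_left
  have hlπ : ∫⁻ z, ENNReal.ofReal (ptrue z) ∂(μ.prod ν) = 1 := by
    rw [← ofReal_integral_eq_lintegral_ofReal hπint (ae_of_all _ hπ0), hπ1, ENNReal.ofReal_one]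
  have hlq : ∀ i, ∫⁻ z, ENNReal.ofReal (q i z) ∂(μ.prod ν) = 1 := by
    intro i
    rw [← ofReal_integral_eq_lintegral_ofReal (hqint i) (ae_of_all _ (hq0 i)), hq1 i,
      ENNReal.ofReal_one]
  have hpX0 : ∀ x, 0 ≤ pX x := by
    intro x
    rw [hpX x]; exact integral_nonneg fun y => hπ0 _
  -- the joint squared-Hellinger integrand
  set F : Q → X × Y → ℝ := fun i z => (Real.sqrt (q i z) - Real.sqrt (ptrue z)) ^ 2 with hFdef
  have hF0 : ∀ i z, 0 ≤ F i z := fun i z => sq_nonneg _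
  have hFm : Measurable (Function.uncurry F) := by
    have : Function.uncurry F = fun p : Q × (X × Y) =>
        (Real.sqrt (Function.uncurry q p) - Real.sqrt (ptrue p.2)) ^ 2 := rfl
    rw [this]
    exact ((Real.continuous_sqrt.measurable.comp hqm).sub
      (Real.continuous_sqrt.measurable.comp (hπm.comp measurable_snd))).pow_const 2
  have hFle : ∀ i z, F i z ≤ 2 * q i z + 2 * ptrue z := by
    intro i z
    have h1 : Real.sqrt (q i z) ^ 2 = q i z := Real.sq_sqrt (hq0 i z)
    have h2 : Real.sqrt (ptrue z) ^ 2 = ptrue z := Real.sq_sqrt (hπ0 z)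
    show (Real.sqrt (q i z) - Real.sqrt (ptrue z)) ^ 2 ≤ 2 * q i z + 2 * ptrue z
    nlinarith [sq_nonneg (Real.sqrt (q i z) + Real.sqrt (ptrue z))]
  have hofF : ∀ i z, ENNReal.ofReal (F i z)
      ≤ 2 * ENNReal.ofReal (q i z) + 2 * ENNReal.ofReal (ptrue z) := by
    intro i z
    calc ENNReal.ofReal (F i z) ≤ ENNReal.ofReal (2 * q i z + 2 * ptrue z) :=
          ENNReal.ofReal_le_ofReal (hFle i z)
      _ = 2 * ENNReal.ofReal (q i z) + 2 * ENNReal.ofReal (ptrue z) := by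
          rw [ENNReal.ofReal_add (mul_nonneg (by norm_num) (hq0 i z))
              (mul_nonneg (by norm_num) (hπ0 z)),
            ENNReal.ofReal_mul (by norm_num), ENNReal.ofReal_mul (by norm_num)]
          norm_num
  have hlF : ∀ i, ∫⁻ z, ENNReal.ofReal (F i z) ∂(μ.prod ν) ≤ 4 := by
    intro i
    have hmq : Measurable fun z => ENNReal.ofReal (q i z) := (hqim i).ennreal_ofReal
    calc ∫⁻ z, ENNReal.ofReal (F i z) ∂(μ.prod ν)
        ≤ ∫⁻ z, (2 * ENNReal.ofReal (q i z) + 2 * ENNReal.ofReal (ptrue z)) ∂(μ.prod ν) :=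
          lintegral_mono fun z => hofF i z
      _ = 2 * (∫⁻ z, ENNReal.ofReal (q i z) ∂(μ.prod ν))
          + 2 * ∫⁻ z, ENNReal.ofReal (ptrue z) ∂(μ.prod ν) := by
          rw [lintegral_add_left (hmq.const_mul 2), lintegral_const_mul 2 hmq,
            lintegral_const_mul 2 hπm.ennreal_ofReal]
      _ = 4 := by rw [hlq i, hlπ]; norm_num
  -- F is integrable on the product of the parameter space and the joint space
  have hFprodint : Integrable (Function.uncurry F) (Pi.prod (μ.prod ν)) := by
    refine ⟨hFm.aestronglyMeasurable, ?_⟩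
    have hfi : (0 : Q × (X × Y) → ℝ) ≤ᵐ[Pi.prod (μ.prod ν)] Function.uncurry F :=
      ae_of_all _ fun p => hF0 p.1 p.2
    refine (hasFiniteIntegral_iff_ofReal hfi).2 ?_
    calc ∫⁻ p, ENNReal.ofReal (Function.uncurry F p) ∂(Pi.prod (μ.prod ν))
        = ∫⁻ i, ∫⁻ z, ENNReal.ofReal (F i z) ∂(μ.prod ν) ∂Pi :=
          lintegral_prod _ hFm.ennreal_ofReal.aemeasurable
      _ ≤ ∫⁻ _, 4 ∂Pi := lintegral_mono fun i => hlF i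
      _ = 4 := by simp
      _ < ⊤ := by norm_num
  -- G : the Π-average of F
  set G : X × Y → ℝ := fun z => ∫ i, F i z ∂Pi with hGdef
  have hG0 : ∀ z, 0 ≤ G z := fun z => integral_nonneg fun i => hF0 i z
  have hGint : Integrable G (μ.prod ν) := hFprodint.integral_prod_right
  have hGae : ∀ᵐ x ∂μ, Integrable (fun y => G (x, y)) ν := hGint.prod_right_ae
  have hGouter : Integrable (fun x => ∫ y, G (x, y) ∂ν) μ := hGint.integral_prod_left
  -- rewrite the right-hand side as an iterated integral of G
  have hRHSz : ∫ i, hell (μ.prod ν) (q i) ptrue ^ 2 ∂Pi = ∫ x, ∫ y, G (x, y) ∂ν ∂μ := by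
    have h1 : ∫ i, hell (μ.prod ν) (q i) ptrue ^ 2 ∂Pi
        = ∫ i, ∫ z, F i z ∂(μ.prod ν) ∂Pi :=
      integral_congr_ae (ae_of_all _ fun i => hell_sq _ _ _)
    rw [h1, integral_integral_swap hFprodint]
    exact integral_prod _ hGint
  -- a.e. x, Π-a.e. i the x-marginal of q i at x is pX x
  have hpXm : Measurable pX := by
    have h : pX = fun x => ∫ y, ptrue (x, y) ∂ν := funext hpX
    rw [h]
    exact (hπm.stronglyMeasurable.integral_prod_right').measurable
  have hmargm : Measurable fun p : X × Q => ∫ y, q p.2 (p.1, y) ∂ν := by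
    have hq2 : Measurable fun p : (X × Q) × Y => q p.1.2 (p.1.1, p.2) :=
      hqm.comp ((measurable_fst.snd).prodMk ((measurable_fst.fst).prodMk measurable_snd))
    exact (hq2.stronglyMeasurable.integral_prod_right').measurable
  have hBmeas : MeasurableSet {p : X × Q | (∫ y, q p.2 (p.1, y) ∂ν) = pX p.1} :=
    measurableSet_eq_fun hmargm (hpXm.comp measurable_fst)
  have hmarg' : ∀ᵐ x ∂μ, ∀ᵐ i ∂Pi, (∫ y, q i (x, y) ∂ν) = pX x :=
    (Measure.ae_ae_comm hBmeas).2 (ae_of_all _ hqmarg)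
  -- a.e. z the family i ↦ q i z has finite Π-lintegral
  have hqzm : Measurable fun p : (X × Y) × Q => q p.2 p.1 :=
    hqm.comp (measurable_snd.prodMk measurable_fst)
  have hfinm : Measurable fun z : X × Y => ∫⁻ i, ENNReal.ofReal (q i z) ∂Pi :=
    Measurable.lintegral_prod_right hqzm.ennreal_ofReal
  have hfin : ∀ᵐ z ∂(μ.prod ν), (∫⁻ i, ENNReal.ofReal (q i z) ∂Pi) < ⊤ := by
    refine ae_lt_top hfinm ?_
    have hswap : ∫⁻ z, ∫⁻ i, ENNReal.ofReal (q i z) ∂Pi ∂(μ.prod ν)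
        = ∫⁻ i, ∫⁻ z, ENNReal.ofReal (q i z) ∂(μ.prod ν) ∂Pi :=
      lintegral_lintegral_swap hqzm.ennreal_ofReal.aemeasurable
    rw [hswap]
    simp [hlq]
  have hfin' : ∀ᵐ x ∂μ, ∀ᵐ y ∂ν, (∫⁻ i, ENNReal.ofReal (q i (x, y)) ∂Pi) < ⊤ :=
    Measure.ae_ae_of_ae_prod hfin
  -- main comparison
  rw [hRHSz]
  refine integral_mono_of_nonneg
    (ae_of_all _ fun x => mul_nonneg (hpX0 x) (sq_nonneg _)) hGouter ?_
  filter_upwards [hGae, hmarg', hfin'] with x hGx hmargx hfinx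
  rcases (hpX0 x).eq_or_lt with hzero | hpos
  · rw [← hzero, zero_mul]
    exact integral_nonneg fun y => hG0 _
  rw [hell_sq, ← integral_const_mul]
  refine integral_mono_of_nonneg
    (ae_of_all _ fun y => mul_nonneg (hpX0 x) (sq_nonneg _)) hGx ?_
  filter_upwards [hfinx] with y hy
  set c : ℝ := Real.sqrt (ptrue (x, y) / pX x) with hc
  have hmixy : (∫ i, q i (x, y) / (∫ y', q i (x, y') ∂ν) ∂Pi)
      = (∫ i, q i (x, y) ∂Pi) / pX x := by
    rw [← integral_div]
    refine integral_congr_ae ?_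
    filter_upwards [hmargx] with i hi
    rw [hi]
  have hqyint : Integrable (fun i => q i (x, y)) Pi :=
    ⟨(hqmi (x, y)).aestronglyMeasurable,
      (hasFiniteIntegral_iff_ofReal (ae_of_all _ fun i => hq0 i (x, y))).2 hy⟩
  have hFyim : Measurable fun i => F i (x, y) := by
    simp only [hFdef]
    exact ((Real.continuous_sqrt.measurable.comp (hqmi (x, y))).sub measurable_const).pow_const 2
  have hFyint : Integrable (fun i => F i (x, y)) Pi := by
    refine Integrable.mono' ((hqyint.const_mul 2).add (integrable_const (2 * ptrue (x, y))))
      hFyim.aestronglyMeasurable (ae_of_all _ fun i => ?_)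
    rw [Real.norm_eq_abs, abs_of_nonneg (hF0 i (x, y))]
    exact hFle i (x, y)
  -- the convex function used in Jensen's inequality
  set ψ : ℝ → ℝ := fun t => t + 2 * c * -Real.sqrt t + c ^ 2 with hψdef
  have hψeq : ∀ t : ℝ, 0 ≤ t → ψ t = (Real.sqrt t - c) ^ 2 := by
    intro t ht
    simp only [hψdef]
    rw [sub_sq, Real.sq_sqrt ht]; ring
  have hψconv : ConvexOn ℝ (Set.Ici 0) ψ := by
    have h1 : ConvexOn ℝ (Set.Ici 0) fun t : ℝ => (2 * c) • (-Real.sqrt t) :=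
      (Real.strictConcaveOn_sqrt.concaveOn.neg).smul (by positivity)
    have h2 := ((convexOn_id (convex_Ici (0 : ℝ))).add h1).add_const (c ^ 2)
    have heq : ψ = (id + fun t : ℝ => (2 * c) • (-Real.sqrt t)) + fun _ => c ^ 2 := by
      funext t
      show ψ t = id t + (2 * c) • (-Real.sqrt t) + c ^ 2
      simp only [hψdef, id_eq, smul_eq_mul]
    rw [heq]; exact h2
  have hψcont : ContinuousOn ψ (Set.Ici 0) := by
    apply Continuous.continuousOn
    simp only [hψdef]
    exact (continuous_id.add (continuous_const.mul Real.continuous_sqrt.neg)).add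
      continuous_const
  -- the scaling identity relating conditional and joint Hellinger integrands
  have hψF : ∀ i, ψ (q i (x, y) / pX x) = F i (x, y) / pX x := by
    intro i
    have h0 : (0 : ℝ) ≤ q i (x, y) / pX x := div_nonneg (hq0 i (x, y)) (hpX0 x)
    rw [hψeq _ h0, hc, Real.sqrt_div (hq0 i (x, y)), Real.sqrt_div (hπ0 (x, y)),
      div_sub_div_same, div_pow, Real.sq_sqrt (hpX0 x)]
  have hfint : Integrable (fun i => q i (x, y) / pX x) Pi := hqyint.div_const _
  have hgfint : Integrable (fun i => ψ (q i (x, y) / pX x)) Pi :=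
    (hFyint.div_const (pX x)).congr (ae_of_all _ fun i => (hψF i).symm)
  have hjensen : ψ (∫ i, q i (x, y) / pX x ∂Pi) ≤ ∫ i, ψ (q i (x, y) / pX x) ∂Pi :=
    hψconv.map_integral_le hψcont isClosed_Ici
      (ae_of_all _ fun i => div_nonneg (hq0 i (x, y)) (hpX0 x)) hfint hgfint
  rw [integral_div] at hjensen
  have h2 : ∫ i, ψ (q i (x, y) / pX x) ∂Pi = G (x, y) / pX x := by
    rw [integral_congr_ae (ae_of_all _ fun i => hψF i)]
    exact integral_div _ _
  rw [h2] at hjensen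
  have hmix0 : 0 ≤ (∫ i, q i (x, y) ∂Pi) / pX x :=
    div_nonneg (integral_nonneg fun i => hq0 i (x, y)) (hpX0 x)
  have hL : (Real.sqrt (∫ i, q i (x, y) / (∫ y', q i (x, y') ∂ν) ∂Pi) - c) ^ 2
      = ψ ((∫ i, q i (x, y) ∂Pi) / pX x) := by
    rw [hmixy]
    exact (hψeq _ hmix0).symm
  rw [hL]
  calc pX x * ψ ((∫ i, q i (x, y) ∂Pi) / pX x)
      ≤ pX x * (G (x, y) / pX x) := mul_le_mul_of_nonneg_left hjensen (hpX0 x)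
    _ = G (x, y) := by rw [mul_comm, div_mul_cancel₀ _ hpos.ne']
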